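/- arXiv:2401.03012 — 3 statements merged into one kernel-verified Lean document; each statement's English description precedes it below -/
import Mathlib

section
/- Let m ≥ 1, let K ∈ ℝ^{m×m} be symmetric positive definite, let X ⊆ ℝ^I be a nonempty compact set, and let k : X → ℝ^m be continuous with k(x) ≠ 0 for every x ∈ X. For ρ > 0 and x ∈ X set M(x, ρ) = (ρK + k(x) k(x)ᵀ)⁻¹ (this matrix is invertible) and define φ_ρ(α, x, y) = (ρKα + k(x) y)ᵀ M(x, ρ) K M(x, ρ) (ρKα + k(x) y) for α ∈ ℝ^m, y ∈ ℝ. Let E = {(α, x, y) ∈ ℝ^m × X × ℝ : αᵀKα + y² k(x)ᵀ K k(x) = 1}. Then for every sequence of positive reals ρ_n → ∞ there exists a subsequence (ρ_{n_j}) such that lim_{j→∞} sup_{(α,x,y) ∈ E} φ_{ρ_{n_j}}(α, x, y) = 1. -/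
/-!
By Sherman–Morrison, `(ρK + kkᵀ)⁻¹(ρKα + yk) = α + θ K⁻¹k` with
`θ = (y - kᵀα) / (ρ + kᵀK⁻¹k)`, hence `φ_ρ(α, x, y) = αᵀKα + 2θ kᵀα + θ² kᵀK⁻¹k`.
On `E`, compactness of `X` bounds `y²` and `kᵀK⁻¹k` uniformly, and Cauchy–Schwarz in the
`K⁻¹`-inner product bounds `(kᵀα)² ≤ (kᵀK⁻¹k)(αᵀKα)`; so `sup_E φ_ρ ≤ 1 + O(1/ρ)`.
At a fixed point of `E` with `y = 0` we have `θ → 0`, so `φ_ρ → αᵀKα = 1`. Thus the whole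
sequence converges and the subsequence can be taken to be the identity.
-/

open Matrix Filter Topology

lemma add_two_mul_add_sq_mul_le {q s c y r C Y : ℝ} (hr : 0 < r) (hc : 0 ≤ c) (hcC : c ≤ C)
    (hq : q ≤ 1) (hs : s ^ 2 ≤ C) (hy : y ^ 2 ≤ Y) :
    q + 2 * ((y - s) / (r + c)) * s + ((y - s) / (r + c)) ^ 2 * c ≤
      1 + (2 * Y + 3 * C) / r + (2 * Y + 2 * C) * C / r ^ 2 := by
  set θ := (y - s) / (r + c)
  have hθ : θ * (r + c) = y - s := div_mul_cancel₀ _ (by positivity)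
  have hys : (y - s) ^ 2 ≤ 2 * Y + 2 * C := by nlinarith [sq_nonneg (y + s)]
  have hθr : (θ * r) ^ 2 ≤ (y - s) ^ 2 := by
    rw [← hθ]; nlinarith [sq_nonneg θ, mul_nonneg (sq_nonneg θ) hc]
  have hlin : 2 * θ * s ≤ (2 * Y + 3 * C) / r := by
    rw [le_div_iff₀ hr]; nlinarith [sq_nonneg (θ * r - s)]
  have hsq : θ ^ 2 * c ≤ (2 * Y + 2 * C) * C / r ^ 2 := by
    rw [le_div_iff₀ (by positivity)]
    calc θ ^ 2 * c * r ^ 2 = (θ * r) ^ 2 * c := by ring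
      _ ≤ (2 * Y + 2 * C) * C :=
        mul_le_mul (hθr.trans hys) hcC hc (by nlinarith [sq_nonneg y, sq_nonneg s])
  linarith

lemma tendsto_one_add_div_add_div_sq (a b : ℝ) :
    Tendsto (fun r : ℝ => 1 + a / r + b / r ^ 2) atTop (𝓝 1) := by
  simpa using ((tendsto_const_nhds (x := a)).div_atTop tendsto_id |>.const_add 1).add
    ((tendsto_const_nhds (x := b)).div_atTop (tendsto_pow_atTop two_ne_zero))

section

variable {n : Type*} [Fintype n] {K : Matrix n n ℝ}

lemma Matrix.IsHermitian.dotProduct_mulVec_comm (hK : K.IsHermitian) (a b : n → ℝ) :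
    a ⬝ᵥ K *ᵥ b = b ⬝ᵥ K *ᵥ a := by
  rw [dotProduct_mulVec, ← mulVec_transpose, ← conjTranspose_eq_transpose_of_trivial, hK.eq,
    dotProduct_comm]

lemma Matrix.PosSemidef.sq_dotProduct_mulVec_le (hK : K.PosSemidef) (a b : n → ℝ) :
    (a ⬝ᵥ K *ᵥ b) ^ 2 ≤ (a ⬝ᵥ K *ᵥ a) * (b ⬝ᵥ K *ᵥ b) := by
  have hquad : ∀ t : ℝ,
      0 ≤ (b ⬝ᵥ K *ᵥ b) * (t * t) + 2 * (a ⬝ᵥ K *ᵥ b) * t + a ⬝ᵥ K *ᵥ a := by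
    intro t
    have h := hK.dotProduct_mulVec_nonneg (a + t • b)
    simp only [star_trivial, mulVec_add, mulVec_smul, dotProduct_add, add_dotProduct,
      dotProduct_smul, smul_dotProduct, smul_eq_mul,
      IsHermitian.dotProduct_mulVec_comm hK.1 b a] at h
    linarith
  have := discrim_le_zero hquad
  unfold discrim at this
  linarith

lemma posDef_smul_add_vecMulVec (hK : K.PosDef) (k : n → ℝ) {r : ℝ} (hr : 0 < r) :
    (r • K + vecMulVec k k).PosDef :=
  (hK.smul hr).add_posSemidef (by simpa using posSemidef_vecMulVec_self_star k)

lemma mulVec_inv_mulVec [DecidableEq n] (hK : K.PosDef) (v : n → ℝ) : K *ᵥ (K⁻¹ *ᵥ v) = v := by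
  rw [mulVec_mulVec, mul_nonsing_inv _ ((isUnit_iff_isUnit_det K).mp hK.isUnit), one_mulVec]

lemma inv_smul_add_vecMulVec_mulVec [DecidableEq n] (hK : K.PosDef) (k α : n → ℝ) (y : ℝ) {r : ℝ}
    (hr : 0 < r) :
    (r • K + vecMulVec k k)⁻¹ *ᵥ (r • (K *ᵥ α) + y • k) =
      α + ((y - k ⬝ᵥ α) / (r + k ⬝ᵥ K⁻¹ *ᵥ k)) • (K⁻¹ *ᵥ k) := by
  have hc : 0 ≤ k ⬝ᵥ K⁻¹ *ᵥ k := by simpa using hK.inv.posSemidef.dotProduct_mulVec_nonneg k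
  have hA := (posDef_smul_add_vecMulVec hK k hr).isUnit
  let := hA.invertible
  refine inv_mulVec_eq_vec ?_
  have hθ : (y - k ⬝ᵥ α) / (r + k ⬝ᵥ K⁻¹ *ᵥ k) * (r + k ⬝ᵥ K⁻¹ *ᵥ k) = y - k ⬝ᵥ α :=
    div_mul_cancel₀ _ (by positivity)
  rw [add_mulVec, mulVec_add, mulVec_add, smul_mulVec, smul_mulVec, mulVec_smul, mulVec_smul,
    vecMulVec_mulVec, vecMulVec_mulVec, mulVec_inv_mulVec hK]
  ext i
  simp only [Pi.add_apply, Pi.smul_apply, smul_eq_mul, MulOpposite.smul_eq_mul_unop,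
    MulOpposite.unop_op]
  linear_combination (-k i) * hθ

/-- The function `φ_ρ(α, x, y)`, with `r = ρ` and `k = k(x)`. -/
noncomputable def phi (K : Matrix n n ℝ) [DecidableEq n] (k : n → ℝ) (r : ℝ) (α : n → ℝ) (y : ℝ) :
    ℝ :=
  (r • (K *ᵥ α) + y • k) ⬝ᵥ ((r • K + vecMulVec k k)⁻¹ *ᵥ (K *ᵥ
    ((r • K + vecMulVec k k)⁻¹ *ᵥ (r • (K *ᵥ α) + y • k))))

lemma phi_eq [DecidableEq n] (hK : K.PosDef) (k α : n → ℝ) (y : ℝ) {r : ℝ} (hr : 0 < r) :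
    phi K k r α y = α ⬝ᵥ K *ᵥ α + 2 * ((y - k ⬝ᵥ α) / (r + k ⬝ᵥ K⁻¹ *ᵥ k)) * (k ⬝ᵥ α) +
      ((y - k ⬝ᵥ α) / (r + k ⬝ᵥ K⁻¹ *ᵥ k)) ^ 2 * (k ⬝ᵥ K⁻¹ *ᵥ k) := by
  have hA := posDef_smul_add_vecMulVec hK k hr
  have hw : (K⁻¹ *ᵥ k) ⬝ᵥ K *ᵥ α = k ⬝ᵥ α := by
    rw [hK.1.dotProduct_mulVec_comm, mulVec_inv_mulVec hK, dotProduct_comm]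
  rw [phi, ← hA.inv.1.dotProduct_mulVec_comm, dotProduct_comm,
    inv_smul_add_vecMulVec_mulVec hK k α y hr]
  simp only [mulVec_add, mulVec_smul, mulVec_inv_mulVec hK, dotProduct_add, add_dotProduct,
    dotProduct_smul, smul_dotProduct, smul_eq_mul, hw, dotProduct_comm α k,
    dotProduct_comm (K⁻¹ *ᵥ k) k]
  ring

lemma phi_le [DecidableEq n] (hK : K.PosDef) {k α : n → ℝ} {y r C D : ℝ} (hr : 0 < r)
    (hD : 0 < D) (hd : D ≤ k ⬝ᵥ K *ᵥ k) (hc : k ⬝ᵥ K⁻¹ *ᵥ k ≤ C)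
    (hE : α ⬝ᵥ K *ᵥ α + y ^ 2 * (k ⬝ᵥ K *ᵥ k) = 1) :
    phi K k r α y ≤ 1 + (2 / D + 3 * C) / r + (2 / D + 2 * C) * C / r ^ 2 := by
  have hq : 0 ≤ α ⬝ᵥ K *ᵥ α := by simpa using hK.posSemidef.dotProduct_mulVec_nonneg α
  have hc₀ : 0 ≤ k ⬝ᵥ K⁻¹ *ᵥ k := by simpa using hK.inv.posSemidef.dotProduct_mulVec_nonneg k
  have hq₁ : α ⬝ᵥ K *ᵥ α ≤ 1 := by nlinarith [sq_nonneg y]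
  have hy : y ^ 2 ≤ 1 / D := by
    rw [le_div_iff₀ hD]; nlinarith [sq_nonneg y]
  have hs : (k ⬝ᵥ α) ^ 2 ≤ C := by
    have hcs := hK.inv.posSemidef.sq_dotProduct_mulVec_le k (K *ᵥ α)
    rw [mulVec_mulVec, nonsing_inv_mul _ ((isUnit_iff_isUnit_det K).mp hK.isUnit), one_mulVec,
      dotProduct_comm (K *ᵥ α)] at hcs
    nlinarith
  rw [phi_eq hK k α y hr]
  simpa only [mul_div_assoc, div_eq_mul_one_div 2 D] using
    add_two_mul_add_sq_mul_le hr hc₀ hc hq₁ hs hy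

lemma tendsto_phi_atTop [DecidableEq n] (hK : K.PosDef) (k α : n → ℝ) (y : ℝ) :
    Tendsto (fun r => phi K k r α y) atTop (𝓝 (α ⬝ᵥ K *ᵥ α)) := by
  have hθ : Tendsto (fun r => (y - k ⬝ᵥ α) / (r + k ⬝ᵥ K⁻¹ *ᵥ k)) atTop (𝓝 0) :=
    tendsto_const_nhds.div_atTop (tendsto_atTop_add_const_right _ _ tendsto_id)
  have hlim := ((hθ.const_mul 2).mul_const (k ⬝ᵥ α)).const_add (α ⬝ᵥ K *ᵥ α) |>.add
    ((hθ.pow 2).mul_const (k ⬝ᵥ K⁻¹ *ᵥ k))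
  simp only [mul_zero, zero_mul, add_zero, ne_eq, OfNat.ofNat_ne_zero, not_false_eq_true,
    zero_pow] at hlim
  refine hlim.congr' ?_
  filter_upwards [eventually_gt_atTop 0] with r hr
  exact (phi_eq hK k α y hr).symm

lemma exists_dotProduct_mulVec_eq_one (hK : K.PosDef) {v : n → ℝ} (hv : v ≠ 0) :
    ∃ α : n → ℝ, α ⬝ᵥ K *ᵥ α = 1 := by
  have hq : 0 < v ⬝ᵥ K *ᵥ v := by simpa using hK.dotProduct_mulVec_pos hv
  refine ⟨(√(v ⬝ᵥ K *ᵥ v))⁻¹ • v, ?_⟩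
  simp only [mulVec_smul, dotProduct_smul, smul_dotProduct, smul_eq_mul, ← mul_assoc,
    ← mul_inv, Real.mul_self_sqrt hq.le]
  exact inv_mul_cancel₀ hq.ne'

/-- The values of `φ_r` on the normalization set `E`. -/
def phiValues {E : Type*} [DecidableEq n] (K : Matrix n n ℝ) (k : E → n → ℝ) (X : Set E)
    (r : ℝ) : Set ℝ :=
  {t | ∃ α : n → ℝ, ∃ x ∈ X, ∃ y : ℝ,
    α ⬝ᵥ K *ᵥ α + y ^ 2 * (k x ⬝ᵥ K *ᵥ k x) = 1 ∧ t = phi K (k x) r α y}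

lemma le_of_mem_phiValues {E : Type*} [DecidableEq n] (hK : K.PosDef) {k : E → n → ℝ}
    {X : Set E} {r C D t : ℝ} (hr : 0 < r) (hD : 0 < D) (hd : ∀ x ∈ X, D ≤ k x ⬝ᵥ K *ᵥ k x)
    (hc : ∀ x ∈ X, k x ⬝ᵥ K⁻¹ *ᵥ k x ≤ C) (ht : t ∈ phiValues K k X r) :
    t ≤ 1 + (2 / D + 3 * C) / r + (2 / D + 2 * C) * C / r ^ 2 := by
  obtain ⟨α, x, hx, y, hE, rfl⟩ := ht
  exact phi_le hK hr hD (hd x hx) (hc x hx) hE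

end

theorem stmt_1_general (m I : ℕ)
    (K : Matrix (Fin m) (Fin m) ℝ) (hK : K.PosDef)
    (X : Set (EuclideanSpace ℝ (Fin I))) (hXc : IsCompact X) (hXne : X.Nonempty)
    (k : EuclideanSpace ℝ (Fin I) → Fin m → ℝ) (hk : ContinuousOn k X)
    (hk0 : ∀ x ∈ X, k x ≠ 0)
    (ρ : ℕ → ℝ) (hρ : Tendsto ρ atTop atTop) :
    (∀ r : ℝ, 0 < r → ∀ x ∈ X, IsUnit (r • K + vecMulVec (k x) (k x))) ∧
    ∃ φ : ℕ → ℕ, StrictMono φ ∧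
      Tendsto (fun j => sSup { t : ℝ | ∃ α : Fin m → ℝ, ∃ x ∈ X, ∃ y : ℝ,
          α ⬝ᵥ K *ᵥ α + y ^ 2 * (k x ⬝ᵥ K *ᵥ k x) = 1 ∧
          t = (ρ (φ j) • (K *ᵥ α) + y • k x) ⬝ᵥ
              ((ρ (φ j) • K + vecMulVec (k x) (k x))⁻¹ *ᵥ (K *ᵥ
               ((ρ (φ j) • K + vecMulVec (k x) (k x))⁻¹ *ᵥ
                (ρ (φ j) • (K *ᵥ α) + y • k x)))) })
        atTop (nhds 1) := by
  refine ⟨fun r hr x _ => (posDef_smul_add_vecMulVec hK (k x) hr).isUnit, id, strictMono_id, ?_⟩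
  change Tendsto (fun j => sSup (phiValues K k X (ρ j))) atTop (𝓝 1)
  obtain ⟨xc, -, hC⟩ := hXc.exists_isMaxOn hXne (f := fun x => k x ⬝ᵥ K⁻¹ *ᵥ k x) (by fun_prop)
  obtain ⟨xd, hxd, hD⟩ := hXc.exists_isMinOn hXne (f := fun x => k x ⬝ᵥ K *ᵥ k x) (by fun_prop)
  set C := k xc ⬝ᵥ K⁻¹ *ᵥ k xc
  set D := k xd ⬝ᵥ K *ᵥ k xd
  have hD₀ : 0 < D := by simpa using hK.dotProduct_mulVec_pos (hk0 xd hxd)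
  have hbound := fun r (hr : 0 < r) t => le_of_mem_phiValues (t := t) hK hr hD₀ hD hC
  obtain ⟨x₀, hx₀⟩ := hXne
  obtain ⟨α₀, hα₀⟩ := exists_dotProduct_mulVec_eq_one hK (hk0 x₀ hx₀)
  have hmem : ∀ r, phi K (k x₀) r α₀ 0 ∈ phiValues K k X r :=
    fun r => ⟨α₀, x₀, hx₀, 0, by simp [hα₀], rfl⟩
  have hlow : Tendsto (fun j => phi K (k x₀) (ρ j) α₀ 0) atTop (𝓝 1) :=
    hα₀ ▸ (tendsto_phi_atTop hK (k x₀) α₀ 0).comp hρ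
  have hup := (tendsto_one_add_div_add_div_sq (2 / D + 3 * C) ((2 / D + 2 * C) * C)).comp hρ
  refine tendsto_of_tendsto_of_tendsto_of_le_of_le' hlow hup ?_ ?_ <;>
    filter_upwards [hρ.eventually_gt_atTop 0] with j hj
  · exact le_csSup ⟨_, hbound _ hj⟩ (hmem _)
  · exact csSup_le ⟨_, hmem _⟩ (hbound _ hj)

/-- (Proposition 4, in coordinates.) Along a subsequence of any sequence
of regularization parameters diverging to infinity, the supremum over the normalization
set `E` of the squared-norm function `φ_ρ` converges to `1`. -/
theorem stmt_1 (m I : ℕ) (hm : 1 ≤ m)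
    (K : Matrix (Fin m) (Fin m) ℝ) (hK : K.PosDef)
    (X : Set (EuclideanSpace ℝ (Fin I))) (hXc : IsCompact X) (hXne : X.Nonempty)
    (k : EuclideanSpace ℝ (Fin I) → Fin m → ℝ) (hk : ContinuousOn k X)
    (hk0 : ∀ x ∈ X, k x ≠ 0)
    (ρ : ℕ → ℝ) (hρpos : ∀ n, 0 < ρ n) (hρ : Tendsto ρ atTop atTop) :
    (∀ r : ℝ, 0 < r → ∀ x ∈ X, IsUnit (r • K + vecMulVec (k x) (k x))) ∧
    ∃ φ : ℕ → ℕ, StrictMono φ ∧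
      Tendsto (fun j => sSup { t : ℝ | ∃ α : Fin m → ℝ, ∃ x ∈ X, ∃ y : ℝ,
          α ⬝ᵥ K *ᵥ α + y ^ 2 * (k x ⬝ᵥ K *ᵥ k x) = 1 ∧
          t = (ρ (φ j) • (K *ᵥ α) + y • k x) ⬝ᵥ
              ((ρ (φ j) • K + vecMulVec (k x) (k x))⁻¹ *ᵥ (K *ᵥ
               ((ρ (φ j) • K + vecMulVec (k x) (k x))⁻¹ *ᵥ
                (ρ (φ j) • (K *ᵥ α) + y • k x)))) })
        atTop (nhds 1) :=
  stmt_1_general m I K hK X hXc hXne k hk hk0 ρ hρ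
end

section
/- Let m ≥ 1, let K ∈ ℝ^{2m×2m} be symmetric positive definite, let K¹, K² ∈ ℝ^{m×m} be symmetric matrices, and let (ρ_n) be a monotone sequence of positive reals diverging to ∞. For α = (α¹; α²) ∈ ℝ^{2m} with α¹, α² ∈ ℝ^m, define v_n(α) = Kᵀ [ (K¹/ρ_n + I_m) α¹ ; (K²/ρ_n + I_m) α² ] ∈ ℝ^{2m} and φ_n(α) = v_n(α)ᵀ (KᵀK/ρ_n + K)⁻¹ K (KᵀK/ρ_n + K)⁻¹ v_n(α) (the matrix KᵀK/ρ_n + K is invertible). Then for every α ∈ ℝ^{2m}, φ_n(α) → αᵀKα as n → ∞, the convergence is uniform on every compact subset of ℝ^{2m}, and consequently for every nonempty compact set E ⊆ ℝ^{2m}, lim_{n→∞} sup_{α ∈ E} φ_n(α) = sup_{α ∈ E} αᵀKα. -/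
open Matrix Filter

/-- The function `φ_n(α)` from the proof of Proposition 7, in coordinates:
the squared fusion-space norm of the output of the fusion-center learning operator
applied to uploaded functions with coefficients `α = (α¹; α²)`. -/
noncomputable def phiFusion (m : ℕ) (K : Matrix (Fin m ⊕ Fin m) (Fin m ⊕ Fin m) ℝ)
    (K1 K2 : Matrix (Fin m) (Fin m) ℝ) (r : ℝ) (α : Fin m ⊕ Fin m → ℝ) : ℝ :=
  let v : Fin m ⊕ Fin m → ℝ :=
    Kᵀ *ᵥ Sum.elim (r⁻¹ • (K1 *ᵥ (α ∘ Sum.inl)) + α ∘ Sum.inl)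
      (r⁻¹ • (K2 *ᵥ (α ∘ Sum.inr)) + α ∘ Sum.inr)
  v ⬝ᵥ ((r⁻¹ • (Kᵀ * K) + K)⁻¹ *ᵥ (K *ᵥ ((r⁻¹ • (Kᵀ * K) + K)⁻¹ *ᵥ v)))

/-!
`phiFusion m K K1 K2 r` depends on `r` only through `t = r⁻¹`, and for `t ≥ 0` the matrix
`t • (Kᵀ * K) + K` is positive definite, hence invertible. So `(t, α) ↦ φ(t⁻¹, α)` is jointly
continuous on `[0, ∞) × ℝ^{2m}`, and at `t = 0` (where Lean's `0⁻¹ = 0` gives `r = 0`) it equals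
`(Kα)ᵀ K⁻¹ K K⁻¹ (Kα) = αᵀ K α`. Joint continuity makes `t ↦ φ(t⁻¹, ·)` continuous into
`C(ℝ^{2m}, ℝ)` with the compact-open topology, i.e. uniformly on compacts, and makes the supremum
over a compact set continuous in `t`; it remains to let `t = ρ_n⁻¹ → 0`.
-/

section

variable {n : Type*} [Fintype n]

theorem Matrix.PosDef.smul_transpose_mul_self_add {K : Matrix n n ℝ} (hK : K.PosDef) {t : ℝ}
    (ht : 0 ≤ t) : (t • (Kᵀ * K) + K).PosDef := by
  have hKK : (Kᵀ * K).PosSemidef := by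
    simpa only [conjTranspose_eq_transpose_of_trivial] using posSemidef_conjTranspose_mul_self K
  exact PosDef.posSemidef_add (hKK.smul ht) hK

theorem Continuous.matrix_inv_of_isUnit_det [DecidableEq n] {X : Type*} [TopologicalSpace X]
    {A : X → Matrix n n ℝ} (hA : Continuous A) (hdet : ∀ x, IsUnit (A x).det) :
    Continuous fun x => (A x)⁻¹ := by
  simp_rw [Matrix.inv_def, Ring.inverse_eq_inv']
  exact (hA.matrix_det.inv₀ fun x => (hdet x).ne_zero).smul hA.matrix_adjugate

end

@[fun_prop]
theorem Continuous.sumElim_pi {X ι κ R : Type*} [TopologicalSpace X] [TopologicalSpace R]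
    {f : X → ι → R} {g : X → κ → R} (hf : Continuous f) (hg : Continuous g) :
    Continuous fun x => Sum.elim (f x) (g x) :=
  continuous_pi fun
    | .inl i => (continuous_apply i).comp hf
    | .inr j => (continuous_apply j).comp hg

variable {m : ℕ} {K : Matrix (Fin m ⊕ Fin m) (Fin m ⊕ Fin m) ℝ}

theorem phiFusion_zero (hK : K.PosDef) (K1 K2 : Matrix (Fin m) (Fin m) ℝ)
    (α : Fin m ⊕ Fin m → ℝ) : phiFusion m K K1 K2 0 α = α ⬝ᵥ K *ᵥ α := by
  have hKT : Kᵀ = K := hK.isHermitian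
  have hdet : IsUnit K.det := hK.det_pos.ne'.isUnit
  have hsplit : Sum.elim (α ∘ Sum.inl) (α ∘ Sum.inr) = α := Sum.elim_comp_inl_inr α
  simp [phiFusion, hKT, hsplit, Matrix.mulVec_mulVec, Matrix.nonsing_inv_mul _ hdet,
    dotProduct_comm]

theorem continuous_phiFusion_inv (hK : K.PosDef) (K1 K2 : Matrix (Fin m) (Fin m) ℝ) :
    Continuous fun p : Set.Ici (0 : ℝ) × (Fin m ⊕ Fin m → ℝ) =>
      phiFusion m K K1 K2 (p.1 : ℝ)⁻¹ p.2 := by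
  have hinv : Continuous fun p : Set.Ici (0 : ℝ) × (Fin m ⊕ Fin m → ℝ) =>
      ((p.1 : ℝ) • (Kᵀ * K) + K)⁻¹ :=
    Continuous.matrix_inv_of_isUnit_det (by fun_prop) fun p =>
      (Matrix.isUnit_iff_isUnit_det _).1 (hK.smul_transpose_mul_self_add p.1.2).isUnit
  simp only [phiFusion, inv_inv]
  fun_prop

theorem stmt_4_general (m : ℕ)
    (K : Matrix (Fin m ⊕ Fin m) (Fin m ⊕ Fin m) ℝ) (hK : K.PosDef)
    (K1 K2 : Matrix (Fin m) (Fin m) ℝ)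
    (ρ : ℕ → ℝ) (hρpos : ∀ n, 0 < ρ n)
    (hρ : Tendsto ρ atTop atTop) :
    (∀ n, IsUnit ((ρ n)⁻¹ • (Kᵀ * K) + K)) ∧
    (∀ α : Fin m ⊕ Fin m → ℝ,
      Tendsto (fun n => phiFusion m K K1 K2 (ρ n) α) atTop (nhds (α ⬝ᵥ K *ᵥ α))) ∧
    (∀ E : Set (Fin m ⊕ Fin m → ℝ), IsCompact E →
      TendstoUniformlyOn (fun n α => phiFusion m K K1 K2 (ρ n) α)
        (fun α => α ⬝ᵥ K *ᵥ α) atTop E) ∧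
    (∀ E : Set (Fin m ⊕ Fin m → ℝ), IsCompact E → E.Nonempty →
      Tendsto (fun n => sSup ((fun α => phiFusion m K K1 K2 (ρ n) α) '' E)) atTop
        (nhds (sSup ((fun α => α ⬝ᵥ K *ᵥ α) '' E)))) := by
  let Φ : C(Set.Ici (0 : ℝ) × (Fin m ⊕ Fin m → ℝ), ℝ) := ⟨_, continuous_phiFusion_inv hK K1 K2⟩
  let t : ℕ → Set.Ici (0 : ℝ) := fun n => ⟨(ρ n)⁻¹, (inv_pos.2 (hρpos n)).le⟩
  let t₀ : Set.Ici (0 : ℝ) := ⟨0, Set.self_mem_Ici⟩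
  have ht : Tendsto t atTop (nhds t₀) := tendsto_subtype_rng.2 (tendsto_inv_atTop_zero.comp hρ)
  have hΦt : ∀ n α, Φ (t n, α) = phiFusion m K K1 K2 (ρ n) α := fun n α => by simp [Φ, t]
  have hΦ0 : ∀ α, Φ (t₀, α) = α ⬝ᵥ K *ᵥ α := fun α => by simp [Φ, t₀, phiFusion_zero hK]
  have hunif : ∀ E, IsCompact E → TendstoUniformlyOn (fun n α => phiFusion m K K1 K2 (ρ n) α)
      (fun α => α ⬝ᵥ K *ᵥ α) atTop E := fun E hE => by
    have h : TendstoUniformlyOn (fun n α => Φ (t n, α)) (fun α => Φ (t₀, α)) atTop E :=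
      ContinuousMap.tendsto_iff_forall_isCompact_tendstoUniformlyOn.1
        ((Φ.curry.continuous.tendsto t₀).comp ht) E hE
    simpa only [hΦt, hΦ0] using h
  refine ⟨fun n => (hK.smul_transpose_mul_self_add (t n).2).isUnit, fun α => ?_, hunif,
    fun E hE _ => ?_⟩
  · exact tendstoUniformlyOn_singleton_iff_tendsto.1 (hunif {α} isCompact_singleton)
  · have h : Tendsto (fun n => sSup ((fun α => Φ (t n, α)) '' E)) atTop
        (nhds (sSup ((fun α => Φ (t₀, α)) '' E))) :=
      ((hE.continuous_sSup (f := Function.curry Φ) Φ.continuous).tendsto t₀).comp ht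
    simpa only [hΦt, hΦ0] using h

/-- (Core convergence claim of Proposition 7.) `φ_n → αᵀKα` pointwise,
uniformly on compacts, and the suprema over any nonempty compact set converge. -/
theorem stmt_4 (m : ℕ) (hm : 1 ≤ m)
    (K : Matrix (Fin m ⊕ Fin m) (Fin m ⊕ Fin m) ℝ) (hK : K.PosDef)
    (K1 K2 : Matrix (Fin m) (Fin m) ℝ) (hK1 : K1.IsSymm) (hK2 : K2.IsSymm)
    (ρ : ℕ → ℝ) (hρpos : ∀ n, 0 < ρ n) (hmono : Monotone ρ)
    (hρ : Tendsto ρ atTop atTop) :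
    (∀ n, IsUnit ((ρ n)⁻¹ • (Kᵀ * K) + K)) ∧
    (∀ α : Fin m ⊕ Fin m → ℝ,
      Tendsto (fun n => phiFusion m K K1 K2 (ρ n) α) atTop (nhds (α ⬝ᵥ K *ᵥ α))) ∧
    (∀ E : Set (Fin m ⊕ Fin m → ℝ), IsCompact E →
      TendstoUniformlyOn (fun n α => phiFusion m K K1 K2 (ρ n) α)
        (fun α => α ⬝ᵥ K *ᵥ α) atTop E) ∧
    (∀ E : Set (Fin m ⊕ Fin m → ℝ), IsCompact E → E.Nonempty →
      Tendsto (fun n => sSup ((fun α => phiFusion m K K1 K2 (ρ n) α) '' E)) atTop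
        (nhds (sSup ((fun α => α ⬝ᵥ K *ᵥ α) '' E)))) :=
  stmt_4_general m K hK K1 K2 ρ hρpos hρ
end

section
/- Let X ⊆ ℝ^d be a closed, connected set with no isolated points (every point of X is a cluster point of X), let φ : X → ℝ^p be continuous, and let m be the dimension of the linear span V = span{φ(x) : x ∈ X} ⊆ ℝ^p. Then there exist two disjoint sets of m points each, {x̄¹_1, …, x̄¹_m} ⊆ X and {x̄²_1, …, x̄²_m} ⊆ X (so 2m pairwise distinct points in total), such that {φ(x̄¹_j)}_{j=1}^{m} is a basis of V and {φ(x̄²_j)}_{j=1}^{m} is a basis of V. -/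
/-- (Proposition 21, phrased through the feature map.) There exist two
disjoint `m`-point subsets of `X` whose feature vectors each form a basis of
`V = span{φ(x) : x ∈ X}`, where `m = dim V`. -/
theorem stmt_13 (d p m : ℕ) (X : Set (EuclideanSpace ℝ (Fin d)))
    (hclosed : IsClosed X) (hconn : IsConnected X)
    (hacc : ∀ x ∈ X, x ∈ closure (X \ {x}))
    (φ : EuclideanSpace ℝ (Fin d) → EuclideanSpace ℝ (Fin p))
    (hφ : ContinuousOn φ X)
    (hm : Module.finrank ℝ (Submodule.span ℝ (φ '' X)) = m) :
    ∃ x1 x2 : Fin m → EuclideanSpace ℝ (Fin d),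
      (∀ j, x1 j ∈ X) ∧ (∀ j, x2 j ∈ X) ∧
      Function.Injective (Sum.elim x1 x2) ∧
      LinearIndependent ℝ (fun j => φ (x1 j)) ∧
      Submodule.span ℝ (Set.range fun j => φ (x1 j)) = Submodule.span ℝ (φ '' X) ∧
      LinearIndependent ℝ (fun j => φ (x2 j)) ∧
      Submodule.span ℝ (Set.range fun j => φ (x2 j)) = Submodule.span ℝ (φ '' X) := by
  classical
  -- Step 1: a basis of V consisting of points of φ '' X
  obtain ⟨t, hts, htspan, htind⟩ := exists_linearIndependent ℝ (φ '' X)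
  have htfin : t.Finite := htind.setFinite
  have : Fintype t := htfin.fintype
  have hcard : Fintype.card t = m := by
    have := finrank_span_set_eq_card htind
    rw [htspan, hm] at this
    simpa [Set.toFinset_card] using this.symm
  -- equivalence Fin m ≃ t
  let e : Fin m ≃ t := (Fintype.equivFinOfCardEq hcard).symm
  -- choose preimages
  have hpre : ∀ j : Fin m, ∃ x, x ∈ X ∧ φ x = (e j : EuclideanSpace ℝ (Fin p)) := by
    intro j
    have : (e j : EuclideanSpace ℝ (Fin p)) ∈ φ '' X := hts (e j).2
    obtain ⟨x, hx, hxe⟩ := this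
    exact ⟨x, hx, hxe⟩
  choose x1 hx1X hx1φ using hpre
  have hind1 : LinearIndependent ℝ (fun j => φ (x1 j)) := by
    have : (fun j => φ (x1 j)) = (fun v : t => (v : EuclideanSpace ℝ (Fin p))) ∘ e := by
      funext j; simp [hx1φ j]
    rw [this]
    exact htind.comp e e.injective
  have hmemV : ∀ x ∈ X, φ x ∈ Submodule.span ℝ (φ '' X) := fun x hx =>
    Submodule.subset_span ⟨x, hx, rfl⟩
  have hspan_of_ind : ∀ z : Fin m → EuclideanSpace ℝ (Fin d), (∀ j, z j ∈ X) →
      LinearIndependent ℝ (fun j => φ (z j)) →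
      Submodule.span ℝ (Set.range fun j => φ (z j)) = Submodule.span ℝ (φ '' X) := by
    intro z hz hind
    apply Submodule.eq_of_le_of_finrank_le
    · rw [Submodule.span_le]
      rintro _ ⟨j, rfl⟩
      exact hmemV _ (hz j)
    · rw [hm, finrank_span_eq_card hind]
      simp
  have hx1inj : Function.Injective x1 := by
    intro i j hij
    have h2 : Function.Injective (fun j => φ (x1 j)) := hind1.injective
    have : φ (x1 i) = φ (x1 j) := by rw [hij]
    exact h2 this
  -- Step 2: perturb to get x2 via filters
  set T : ∀ _ : Fin m, Filter (EuclideanSpace ℝ (Fin d)) :=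
    fun j => nhdsWithin (x1 j) (X \ {x1 j}) with hT
  have hTne : ∀ j, (T j).NeBot := by
    intro j
    rw [hT]
    exact mem_closure_iff_nhdsWithin_neBot.mp (hacc _ (hx1X j))
  have : (Filter.pi T).NeBot := by
    haveI := hTne; infer_instance
  -- eventually linear independent
  have htendφ : ∀ j, Filter.Tendsto (fun z : Fin m → EuclideanSpace ℝ (Fin d) => φ (z j))
      (Filter.pi T) (nhds (φ (x1 j))) := by
    intro j
    have h1 : Filter.Tendsto (fun z : Fin m → EuclideanSpace ℝ (Fin d) => z j)
        (Filter.pi T) (T j) := Filter.tendsto_eval_pi T j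
    have h2 : Filter.Tendsto φ (T j) (nhds (φ (x1 j))) := by
      have := (hφ (x1 j) (hx1X j)).tendsto
      exact this.mono_left (nhdsWithin_mono _ Set.diff_subset)
    exact h2.comp h1
  have htend : Filter.Tendsto (fun z (j : Fin m) => φ (z j)) (Filter.pi T)
      (nhds fun j => φ (x1 j)) := by
    rw [nhds_pi]
    exact Filter.tendsto_pi.2 htendφ
  have hev1 : ∀ᶠ z in Filter.pi T, LinearIndependent ℝ (fun j => φ (z j)) :=
    htend.eventually (isOpen_setOf_linearIndependent.eventually_mem hind1)
  have hev2 : ∀ᶠ z in Filter.pi T, ∀ j, z j ∈ X \ {x1 j} :=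
    Filter.eventually_pi (fun j => self_mem_nhdsWithin)
  have hev3 : ∀ᶠ z in Filter.pi T, ∀ i j, i ≠ j → z i ≠ z j := by
    rw [Filter.eventually_all]
    intro i
    rw [Filter.eventually_all]
    intro j
    rcases eq_or_ne i j with rfl | hij
    · exact Filter.Eventually.of_forall fun _ h => absurd rfl h
    · have hxy : x1 i ≠ x1 j := fun h => hij (hx1inj h)
      have htij : Filter.Tendsto (fun z : Fin m → EuclideanSpace ℝ (Fin d) => (z i, z j))
          (Filter.pi T) (nhds (x1 i, x1 j)) := by
        refine Filter.Tendsto.prodMk_nhds ?_ ?_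
        · exact (Filter.tendsto_eval_pi T i).mono_right nhdsWithin_le_nhds
        · exact (Filter.tendsto_eval_pi T j).mono_right nhdsWithin_le_nhds
      have hopen : IsOpen {q : (EuclideanSpace ℝ (Fin d)) × (EuclideanSpace ℝ (Fin d)) | q.1 ≠ q.2} :=
        isOpen_ne_fun continuous_fst continuous_snd
      exact (htij.eventually (hopen.eventually_mem hxy)).mono fun z h _ => h
  have hev4 : ∀ᶠ z in Filter.pi T, ∀ i j, i ≠ j → z j ≠ x1 i := by
    rw [Filter.eventually_all]
    intro i
    rw [Filter.eventually_all]
    intro j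
    rcases eq_or_ne i j with rfl | hij
    · exact Filter.Eventually.of_forall fun _ h => absurd rfl h
    · have hxy : x1 j ≠ x1 i := fun h => hij (hx1inj h.symm)
      have htj : Filter.Tendsto (fun z : Fin m → EuclideanSpace ℝ (Fin d) => z j)
          (Filter.pi T) (nhds (x1 j)) :=
        (Filter.tendsto_eval_pi T j).mono_right nhdsWithin_le_nhds
      exact (htj.eventually (isOpen_ne.eventually_mem hxy)).mono fun z h _ => h
  obtain ⟨z, hz1, hz2, hz3, hz4⟩ := (hev1.and (hev2.and (hev3.and hev4))).exists
  refine ⟨x1, z, hx1X, fun j => (hz2 j).1, ?_, hind1, hspan_of_ind x1 hx1X hind1, hz1,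
    hspan_of_ind z (fun j => (hz2 j).1) hz1⟩
  -- injectivity of Sum.elim
  intro a b hab
  rcases a with a | a <;> rcases b with b | b
  · exact congrArg (Sum.inl : Fin m → Fin m ⊕ Fin m) (hx1inj (by simpa using hab))
  · exfalso
    simp only [Sum.elim_inl, Sum.elim_inr] at hab
    rcases eq_or_ne a b with heq | hne
    · exact (hz2 b).2 (by rw [heq] at hab; exact hab.symm)
    · exact hz4 a b hne hab.symm
  · exfalso
    simp only [Sum.elim_inl, Sum.elim_inr] at hab
    rcases eq_or_ne b a with heq | hne
    · exact (hz2 a).2 (by rw [heq] at hab; exact hab)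
    · exact hz4 b a hne hab
  · have : a = b := by
      by_contra hne
      exact hz3 a b hne (by simpa using hab)
    simp [this]
end
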